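/- Let Φ ∈ ℝ^{n×M} be a real matrix with K := ΦΦᵀ invertible, y ∈ ℝⁿ, η > 0 with I − ηK positive semidefinite, and t ≥ 1 a natural number. Let v₀ = 0 ∈ ℝ^M, v_{s+1} = v_s − η Φᵀ(Φ v_s − y) be the gradient descent iterates and ŵ = Φᵀ K⁻¹ y the minimum-norm interpolating solution. Then ‖v_t − ŵ‖² ≤ (1/(2·e·η·t)) · ‖K⁻¹ y‖², where e is Euler's number. In particular, for any feature vector z ∈ ℝ^M, the squared prediction gap satisfies |⟨z, v_t⟩ − ⟨z, ŵ⟩|² ≤ ‖z‖² · (1/(2·e·η·t)) · ‖K⁻¹ y‖². -/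

import Mathlib

/-!
Since `ŵ = Φᵀ c` with `c = K⁻¹ y` interpolates, the error contracts as
`v t - ŵ = (1 - ηΦᵀΦ)ᵗ (v 0 - ŵ) = -Φᵀ (1 - ηK)ᵗ c`, so
`‖v t - ŵ‖² = cᵀ (1 - ηK)ᵗ K (1 - ηK)ᵗ c`. The hypotheses put the spectrum of `K` in `[0, 1/η]`,
and by the functional calculus the quadratic form is at most
`sup_{λ ∈ [0, 1/η]} λ (1 - ηλ)^{2t} ‖c‖²`; that supremum is `≤ 1/(2eηt)` by `1 - u ≤ e^{-u}` and
`u e^{-u} ≤ e^{-1}`. The prediction bound is Cauchy–Schwarz.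
-/

open Matrix

theorem Real.mul_one_sub_mul_pow_le {η x : ℝ} (hη : 0 < η) (hx : 0 ≤ x) (hηx : 0 ≤ 1 - η * x)
    {k : ℕ} (hk : 0 < k) : x * (1 - η * x) ^ k ≤ 1 / (Real.exp 1 * η * k) := by
  have hk' : (0 : ℝ) < k := by exact_mod_cast hk
  have hpow : (1 - η * x) ^ k ≤ Real.exp (-(k * (η * x))) :=
    calc (1 - η * x) ^ k ≤ Real.exp (-(η * x)) ^ k :=
          pow_le_pow_left₀ hηx (Real.one_sub_le_exp_neg _) k
      _ = Real.exp (-(k * (η * x))) := by rw [← Real.exp_nat_mul]; ring_nf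
  calc x * (1 - η * x) ^ k ≤ x * Real.exp (-(k * (η * x))) := by gcongr
    _ = (k * (η * x)) * Real.exp (-(k * (η * x))) / (η * k) := by field_simp
    _ ≤ Real.exp (-1) / (η * k) := by gcongr; exact Real.mul_exp_neg_le_exp_neg_one _
    _ = 1 / (Real.exp 1 * η * k) := by rw [Real.exp_neg]; field_simp

section FunctionalCalculus

open scoped MatrixOrder ComplexOrder

variable {𝕜 n : Type*} [RCLike 𝕜] [Fintype n] [DecidableEq n] {K : Matrix n n 𝕜} {η : ℝ}

theorem Matrix.cfc_one_sub_const_mul (hK : K.IsHermitian) :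
    cfc (fun x : ℝ => 1 - η * x) K = 1 - η • K := by
  rw [cfc_sub .., cfc_const_one .., cfc_const_mul_id ..]

theorem Matrix.IsHermitian.mul_le_one_of_mem_spectrum (hK : K.IsHermitian)
    (h : (1 - η • K).PosSemidef) {x : ℝ} (hx : x ∈ spectrum ℝ K) : η * x ≤ 1 := by
  rw [← cfc_one_sub_const_mul hK, ← nonneg_iff_posSemidef, cfc_nonneg_iff _ K] at h
  linarith [h x hx]

theorem Matrix.PosSemidef.one_sub_smul_pow_mul_mul_pow_le (hK : K.PosSemidef)
    (h : (1 - η • K).PosSemidef) (hη : 0 < η) {t : ℕ} (ht : 0 < t) :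
    (1 - η • K) ^ t * K * (1 - η • K) ^ t ≤ (1 / (2 * Real.exp 1 * η * t)) • 1 := by
  have hsplit : (fun x : ℝ => x * (1 - η * x) ^ (2 * t)) =
      fun x => (1 - η * x) ^ t * x * (1 - η * x) ^ t := by
    funext x; ring
  have hcfc : cfc (fun x : ℝ => x * (1 - η * x) ^ (2 * t)) K =
      (1 - η • K) ^ t * K * (1 - η • K) ^ t := by
    rw [hsplit, cfc_mul .., cfc_mul .., cfc_pow .., cfc_one_sub_const_mul hK.isHermitian,
      cfc_id' ..]
  rw [← hcfc, ← Algebra.algebraMap_eq_smul_one, ← cfc_const (1 / (2 * Real.exp 1 * η * t)) K]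
  refine cfc_mono fun x hx => ?_
  have hx0 : 0 ≤ x := spectrum_nonneg_of_nonneg (nonneg_iff_posSemidef.mpr hK) hx
  have hηx : 0 ≤ 1 - η * x := by linarith [hK.isHermitian.mul_le_one_of_mem_spectrum h hx]
  exact (Real.mul_one_sub_mul_pow_le hη hx0 hηx (by omega : 0 < 2 * t)).trans_eq
    (by push_cast; ring)

end FunctionalCalculus

open scoped MatrixOrder in
theorem Matrix.dotProduct_mulVec_le_of_le_smul_one {n : Type*} [Fintype n] [DecidableEq n]
    {P : Matrix n n ℝ} {β : ℝ} (hP : P ≤ β • 1) (c : n → ℝ) : c ⬝ᵥ P *ᵥ c ≤ β * (c ⬝ᵥ c) := by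
  have := (le_iff.mp hP).dotProduct_mulVec_nonneg c
  rw [star_trivial, sub_mulVec, smul_mulVec, one_mulVec, dotProduct_sub, dotProduct_smul,
    smul_eq_mul] at this
  linarith

theorem Matrix.one_sub_smul_mul_pow_mul {R m n : Type*} [CommRing R] [Fintype m] [Fintype n]
    [DecidableEq m] [DecidableEq n] (B : Matrix n m R) (A : Matrix m n R) (η : R) (s : ℕ) :
    (1 - η • (B * A)) ^ s * B = B * (1 - η • (A * B)) ^ s := by
  induction s with
  | zero => simp
  | succ k ih =>
    rw [pow_succ, Matrix.mul_assoc, pow_succ, ← Matrix.mul_assoc B, ← ih, Matrix.mul_assoc]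
    congr 1
    simp only [Matrix.sub_mul, Matrix.mul_sub, Matrix.one_mul, Matrix.mul_one, Matrix.smul_mul,
      Matrix.mul_smul, Matrix.mul_assoc]

theorem sub_eq_pow_mulVec_of_gradient_step {R m n : Type*} [CommRing R] [Fintype m] [Fintype n]
    [DecidableEq n] (Φ : Matrix m n R) (y : m → R) (η : R) (v : ℕ → n → R)
    (hstep : ∀ s, v (s + 1) = v s - η • (Φᵀ *ᵥ (Φ *ᵥ v s - y)))
    {w : n → R} (hw : Φ *ᵥ w = y) (s : ℕ) :
    v s - w = (1 - η • (Φᵀ * Φ)) ^ s *ᵥ (v 0 - w) := by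
  induction s with
  | zero => simp
  | succ k ih =>
    rw [pow_succ', ← mulVec_mulVec, ← ih, hstep, ← hw, ← mulVec_sub, sub_mulVec, one_mulVec,
      smul_mulVec, ← mulVec_mulVec, sub_right_comm]

theorem sub_eq_neg_transpose_mulVec_of_gradient_step {R m n : Type*} [CommRing R] [Fintype m]
    [Fintype n] [DecidableEq m] [DecidableEq n] (Φ : Matrix m n R) (y : m → R) (η : R)
    (v : ℕ → n → R) (hv0 : v 0 = 0) (hstep : ∀ s, v (s + 1) = v s - η • (Φᵀ *ᵥ (Φ *ᵥ v s - y)))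
    {c : m → R} {w : n → R} (hw : w = Φᵀ *ᵥ c) (hΦw : Φ *ᵥ w = y) (s : ℕ) :
    v s - w = -(Φᵀ *ᵥ ((1 - η • (Φ * Φᵀ)) ^ s *ᵥ c)) := by
  rw [sub_eq_pow_mulVec_of_gradient_step Φ y η v hstep hΦw, hv0, zero_sub, mulVec_neg, hw,
    mulVec_mulVec, one_sub_smul_mul_pow_mul, ← mulVec_mulVec]

theorem Matrix.IsSymm.transpose_mulVec_mulVec_dotProduct_self {R m n : Type*} [CommSemiring R]
    [Fintype m] [Fintype n] {A : Matrix m m R} (hA : A.IsSymm) (Φ : Matrix m n R) (c : m → R) :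
    (Φᵀ *ᵥ (A *ᵥ c)) ⬝ᵥ (Φᵀ *ᵥ (A *ᵥ c)) = c ⬝ᵥ (A * (Φ * Φᵀ) * A) *ᵥ c := by
  rw [← mulVec_mulVec, ← mulVec_mulVec, dotProduct_mulVec c, ← mulVec_transpose, hA.eq,
    dotProduct_mulVec, vecMul_transpose, mulVec_mulVec, dotProduct_comm]

theorem Matrix.dotProduct_sq_le {n : Type*} [Fintype n] (u v : n → ℝ) :
    (u ⬝ᵥ v) ^ 2 ≤ (u ⬝ᵥ u) * (v ⬝ᵥ v) := by
  simpa only [dotProduct, sq] using Finset.sum_mul_sq_le_sq_mul_sq Finset.univ u v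

/-- Gradient descent approximation of the minimum-norm interpolating solution:
`‖v_t - ŵ‖² ≤ (1/(2eηt))‖K⁻¹y‖²` and for any feature vector `z`,
`|⟨z, v_t⟩ - ⟨z, ŵ⟩|² ≤ ‖z‖² (1/(2eηt)) ‖K⁻¹y‖²`, where `K = ΦΦᵀ`. -/
theorem gd_approximates_min_norm_solution {n M : ℕ}
    (Φ : Matrix (Fin n) (Fin M) ℝ)
    (hK : IsUnit (Φ * Φ.transpose).det) (y : Fin n → ℝ)
    (η : ℝ) (hη : 0 < η) (hpsd : (1 - η • (Φ * Φ.transpose)).PosSemidef)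
    (t : ℕ) (ht : 1 ≤ t)
    (v : ℕ → (Fin M → ℝ)) (hv0 : v 0 = 0)
    (hstep : ∀ s : ℕ, v (s + 1) = v s - η • (Φ.transpose.mulVec (Φ.mulVec (v s) - y)))
    (w : Fin M → ℝ) (hw : w = Φ.transpose.mulVec ((Φ * Φ.transpose)⁻¹.mulVec y)) :
    ((v t - w) ⬝ᵥ (v t - w)
        ≤ (1 / (2 * Real.exp 1 * η * t))
          * (((Φ * Φ.transpose)⁻¹.mulVec y) ⬝ᵥ ((Φ * Φ.transpose)⁻¹.mulVec y)))
    ∧ ∀ z : Fin M → ℝ,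
        |z ⬝ᵥ v t - z ⬝ᵥ w| ^ 2
          ≤ (z ⬝ᵥ z) * ((1 / (2 * Real.exp 1 * η * t))
            * (((Φ * Φ.transpose)⁻¹.mulVec y) ⬝ᵥ ((Φ * Φ.transpose)⁻¹.mulVec y))) := by
  set K := Φ * Φ.transpose
  set c := K⁻¹ *ᵥ y
  have hKpsd : K.PosSemidef := by
    simpa only [conjTranspose_eq_transpose_of_trivial] using posSemidef_self_mul_conjTranspose Φ
  have hsymm : (1 - η • K).IsSymm := by
    rw [IsSymm, ← conjTranspose_eq_transpose_of_trivial]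
    exact hpsd.isHermitian
  have hΦw : Φ *ᵥ w = y := by
    rw [hw, mulVec_mulVec, mulVec_mulVec, mul_nonsing_inv _ hK, one_mulVec]
  have hbound : (v t - w) ⬝ᵥ (v t - w) ≤ 1 / (2 * Real.exp 1 * η * t) * (c ⬝ᵥ c) := by
    rw [sub_eq_neg_transpose_mulVec_of_gradient_step Φ y η v hv0 hstep hw hΦw, neg_dotProduct,
      dotProduct_neg, neg_neg, (hsymm.pow t).transpose_mulVec_mulVec_dotProduct_self]
    exact dotProduct_mulVec_le_of_le_smul_one (hKpsd.one_sub_smul_pow_mul_mul_pow_le hpsd hη ht) c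
  refine ⟨hbound, fun z => ?_⟩
  calc |z ⬝ᵥ v t - z ⬝ᵥ w| ^ 2 = (z ⬝ᵥ (v t - w)) ^ 2 := by rw [dotProduct_sub, sq_abs]
    _ ≤ (z ⬝ᵥ z) * ((v t - w) ⬝ᵥ (v t - w)) := dotProduct_sq_le z _
    _ ≤ _ := mul_le_mul_of_nonneg_left hbound (dotProduct_self_star_nonneg z)
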